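/- (Lower bound.) For every a ∈ I and every n ≥ 1, (1/2)·v_{N(n)}(1) ≤ sup_{x ∈ I, y ∈ I} | G_{N,a}({x' ∈ I : T_N^n(x') ∈ [0,x] and s_{n,a}(x') ∈ [0,y]}) − (1/log((N+1)/N))·log((xy+N)/N) |, where v_{N(n)}(1) = (1+N)·N^{n+1}/(q̃_{n+1}·q̃_{n+2}) and the sequence q̃ is defined by q̃_{−1}=0, q̃_0=1 and q̃_k = N(q̃_{k−1}+q̃_{k−2}) for k ≥ 1. -/

import Mathlib

open MeasureTheory Set Filter
open scoped Classical Topology ENNReal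

/-- The N-continued fraction transformation `T_N x = N/x - ⌊N/x⌋` (with `T_N 0 = 0`). -/
noncomputable def TN (N : ℕ) (x : ℝ) : ℝ := (N : ℝ) / x - ⌊(N : ℝ) / x⌋

/-- `digit N x k` is the (k+1)-st N-continued fraction digit `a_{k+1}(x) = ⌊N / T_N^k(x)⌋`. -/
noncomputable def digit (N : ℕ) (x : ℝ) (k : ℕ) : ℕ := ⌊(N : ℝ) / (TN N)^[k] x⌋₊

/-- The conditional measure `G_{N,a}` with distribution function `(N+a)x/(ax+N)` on `[0,1]`,
i.e. with density `N(N+a)/(ax+N)²` with respect to Lebesgue measure on `[0,1]`. -/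
noncomputable def GNa (N : ℕ) (a : ℝ) : Measure ℝ :=
  (volume.restrict (Icc (0:ℝ) 1)).withDensity
    (fun x => ENNReal.ofReal ((N : ℝ) * (N + a) / (a * x + N) ^ 2))

/-- `sSeq N a x n = s_{n,a}(x)`: `s_{0,a} = a`, `s_{n,a} = N/(s_{n-1,a} + a_n(x))`. -/
noncomputable def sSeq (N : ℕ) (a x : ℝ) : ℕ → ℝ
  | 0 => a
  | (n+1) => (N : ℝ) / (sSeq N a x n + (digit N x n : ℝ))

/-- The sequence `q̃`, shifted: `qt N (k+1) = q̃_k` where `q̃_{-1}=0`, `q̃_0=1`,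
`q̃_k = N(q̃_{k-1}+q̃_{k-2})`. -/
noncomputable def qt (N : ℕ) : ℕ → ℝ
  | 0 => 0
  | 1 => 1
  | (k+2) => (N : ℝ) * (qt N (k+1) + qt N k)

/-!
On the rank-`n` cylinder on which the first `n` digits all equal `N` (the open interval between
`(invBranch N)^[n] 0` and `(invBranch N)^[n] 1`), `T_N^n` runs through `(0,1)` while `s_{n,a}`
is the constant `y₀ = (invBranch N)^[n] a`. So `y ↦ G_{N,a}(s_{n,a} ≤ y)` jumps at `y₀` by at least
the `G_{N,a}`-measure of that cylinder, which is at least `v_{N(n)}(1)`, while the limit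
distribution function `y ↦ log((y+N)/N) / log((N+1)/N)` is continuous; no continuous function
approximates a jump of size `δ` uniformly to within less than `δ/2`.
-/

lemma le_two_mul_of_jump {F H : ℝ → ℝ} {y₀ δ S : ℝ} (hH : ContinuousWithinAt H (Iio y₀) y₀)
    (hjump : ∀ y < y₀, δ ≤ F y₀ - F y) (hS : ∀ᶠ y in 𝓝[≤] y₀, |F y - H y| ≤ S) :
    δ ≤ 2 * S := by
  refine le_of_forall_pos_le_add fun η hη => ?_
  have hH' : ∀ᶠ y in 𝓝[<] y₀, H y₀ - η < H y := hH.eventually (lt_mem_nhds (by linarith))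
  have hS' : ∀ᶠ y in 𝓝[<] y₀, |F y - H y| ≤ S :=
    hS.filter_mono (nhdsWithin_mono _ Iio_subset_Iic_self)
  obtain ⟨y, hHy, hSy, hy⟩ := (hH'.and (hS'.and self_mem_nhdsWithin)).exists
  have hS₀ := hS.self_of_nhdsWithin self_mem_Iic
  have := hjump y hy
  rw [abs_le] at hSy hS₀
  linarith

lemma bddAbove_range_abs_measureReal_sub {ι α : Type*} [MeasurableSpace α] (μ : Measure α)
    [IsFiniteMeasure μ] (s : ι → Set α) {g : ι → ℝ} {C : ℝ} (hg : ∀ i, |g i| ≤ C) :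
    BddAbove (range fun i => |μ.real (s i) - g i|) :=
  ⟨μ.real univ + C, forall_mem_range.2 fun i => (abs_sub _ _).trans (add_le_add
    ((abs_of_nonneg measureReal_nonneg).trans_le (measureReal_mono (subset_univ _))) (hg i))⟩

lemma qt_add_two (N k : ℕ) : qt N (k + 2) = N * (qt N (k + 1) + qt N k) := rfl

lemma qt_nonneg (N : ℕ) : ∀ k, 0 ≤ qt N k
  | 0 => le_rfl
  | 1 => zero_le_one
  | k + 2 => mul_nonneg (Nat.cast_nonneg N) (add_nonneg (qt_nonneg N (k + 1)) (qt_nonneg N k))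

lemma qt_succ_pos {N : ℕ} (hN : 0 < N) : ∀ k, 0 < qt N (k + 1)
  | 0 => one_pos
  | k + 1 =>
    mul_pos (Nat.cast_pos.2 hN) (add_pos_of_pos_of_nonneg (qt_succ_pos hN k) (qt_nonneg N k))

lemma qt_succ_sq_sub_mul (N : ℕ) : ∀ n, qt N (n + 1) ^ 2 - qt N n * qt N (n + 2) = (-N) ^ n
  | 0 => by simp [qt]
  | n + 1 => by
    rw [qt_add_two N (n + 1), pow_succ]
    linear_combination (-(N : ℝ)) * qt_succ_sq_sub_mul N n + qt N (n + 2) * qt_add_two N n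

lemma one_add_mul_mul_le_qt {N : ℕ} (hN : 0 < N) {a : ℝ} (ha : a ∈ Icc (0 : ℝ) 1) (k : ℕ) :
    (1 + N) * N * ((a * qt N k + qt N (k + 1)) * (a * qt N (k + 1) + qt N (k + 2))) ≤
      (N + a) * (qt N (k + 2) * qt N (k + 3)) := by
  have hN1 : (1 : ℝ) ≤ N := Nat.one_le_cast.2 hN
  have hA := qt_nonneg N k
  have hB := qt_succ_pos hN k
  have hC := qt_succ_pos hN (k + 1)
  have hNC : qt N (k + 1) ≤ N * qt N (k + 2) := by
    calc qt N (k + 1) ≤ 1 * 1 * (qt N (k + 1) + qt N k) := by linarith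
      _ ≤ N * N * (qt N (k + 1) + qt N k) := by gcongr
      _ = N * qt N (k + 2) := by rw [qt_add_two]; ring
  have key : (N + a) * (qt N (k + 2) * qt N (k + 3)) -
      (1 + N) * N * ((a * qt N k + qt N (k + 1)) * (a * qt N (k + 1) + qt N (k + 2))) =
      (1 - a) * (N * qt N (k + 2) * (N * qt N (k + 2) - qt N (k + 1))) +
        a * ((N + 1) * (N - 1) * qt N (k + 2) * (qt N (k + 2) + qt N (k + 1))) +
        (1 + N) * N * qt N k * qt N (k + 1) * (a * (1 - a)) := by
    rw [qt_add_two N (k + 1), qt_add_two N k]; ring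
  have h₁ : 0 ≤ (1 - a) * (N * qt N (k + 2) * (N * qt N (k + 2) - qt N (k + 1))) := by
    have := sub_nonneg.2 ha.2; have := sub_nonneg.2 hNC; positivity
  have h₂ : 0 ≤ a * ((N + 1) * (N - 1) * qt N (k + 2) * (qt N (k + 2) + qt N (k + 1))) := by
    have := ha.1; have := sub_nonneg.2 hN1; positivity
  have h₃ : 0 ≤ (1 + N) * N * qt N k * qt N (k + 1) * (a * (1 - a)) := by
    have := ha.1; have := sub_nonneg.2 ha.2; positivity
  linarith

/-- The inverse branch of `T_N` with digit `N`; it is also the step `s ↦ N / (s + N)` of the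
recursion for `s_{n,a}` along the digit `N`. -/
noncomputable def invBranch (N : ℕ) (t : ℝ) : ℝ := N / (N + t)

section invBranch

variable {N : ℕ}

lemma invBranch_mem_Ioc (hN : 0 < N) {t : ℝ} (ht : 0 ≤ t) : invBranch N t ∈ Ioc 0 1 := by
  have : (0 : ℝ) < N := Nat.cast_pos.2 hN
  exact ⟨by unfold invBranch; positivity, by rw [invBranch, div_le_one (by positivity)]; linarith⟩

lemma invBranch_lt_one {t : ℝ} (ht : 0 < t) : invBranch N t < 1 := by
  have : (0 : ℝ) ≤ N := Nat.cast_nonneg N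
  rw [invBranch, div_lt_one (by positivity)]; linarith

lemma mapsTo_invBranch_Ioo (hN : 0 < N) : MapsTo (invBranch N) (Ioo 0 1) (Ioo 0 1) :=
  fun _ ht => ⟨(invBranch_mem_Ioc hN ht.1.le).1, invBranch_lt_one ht.1⟩

lemma mapsTo_invBranch_Icc (hN : 0 < N) : MapsTo (invBranch N) (Icc 0 1) (Icc 0 1) :=
  fun _ ht => Ioc_subset_Icc_self (invBranch_mem_Ioc hN ht.1)

lemma continuousOn_invBranch (hN : 0 < N) : ContinuousOn (invBranch N) (Icc 0 1) := by
  have : (0 : ℝ) < N := Nat.cast_pos.2 hN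
  refine continuousOn_const.div (by fun_prop) fun t ht => ?_
  have := ht.1; positivity

lemma div_invBranch (hN : 0 < N) (t : ℝ) : N / invBranch N t = N + t :=
  div_div_cancel₀ (Nat.cast_ne_zero.2 hN.ne')

lemma iterate_invBranch_one (hN : 0 < N) (k : ℕ) :
    (invBranch N)^[k] 1 = N * qt N (k + 1) / qt N (k + 2) := by
  have hN' : (N : ℝ) ≠ 0 := Nat.cast_ne_zero.2 hN.ne'
  induction k with
  | zero => simp [qt, hN']
  | succ k ih =>
    have hB := qt_succ_pos hN k
    have hC := qt_succ_pos hN (k + 1)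
    rw [Function.iterate_succ_apply', ih, invBranch, qt_add_two N (k + 1)]
    field_simp

lemma TN_invBranch (hN : 0 < N) {t : ℝ} (ht : t ∈ Ico 0 1) : TN N (invBranch N t) = t := by
  rw [TN, div_invBranch hN, Int.floor_natCast_add, Int.floor_eq_zero_iff.2 ht]
  push_cast
  ring

lemma iterate_TN_iterate_invBranch (hN : 0 < N) {t : ℝ} (ht : t ∈ Ioo 0 1) (n : ℕ) :
    (TN N)^[n] ((invBranch N)^[n] t) = t := by
  induction n with
  | zero => rfl
  | succ n ih =>
    rw [Function.iterate_succ_apply, Function.iterate_succ_apply',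
      TN_invBranch hN (Ioo_subset_Ico_self ((mapsTo_invBranch_Ioo hN).iterate n ht)), ih]

lemma digit_iterate_invBranch (hN : 0 < N) {t : ℝ} (ht : t ∈ Ioo 0 1) {n k : ℕ} (hk : k < n) :
    digit N ((invBranch N)^[n] t) k = N := by
  obtain ⟨j, rfl⟩ := Nat.exists_eq_add_of_lt hk
  have hs := (mapsTo_invBranch_Ioo hN).iterate j ht
  rw [digit, add_assoc, Function.iterate_add_apply,
    iterate_TN_iterate_invBranch hN ((mapsTo_invBranch_Ioo hN).iterate (j + 1) ht),
    Function.iterate_succ_apply', div_invBranch hN, add_comm, Nat.floor_add_natCast hs.1.le,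
    Nat.floor_eq_zero.2 hs.2, zero_add]

lemma sSeq_eq_iterate_invBranch {a x : ℝ} {n : ℕ} (hd : ∀ k < n, digit N x k = N) :
    sSeq N a x n = (invBranch N)^[n] a := by
  induction n with
  | zero => rfl
  | succ n ih =>
    rw [Function.iterate_succ_apply', ← ih fun k hk => hd k (Nat.lt_succ_of_lt hk), sSeq,
      hd n (Nat.lt_succ_self n), invBranch, add_comm]

end invBranch

/-- The open rank-`n` cylinder of `T_N` on which the first `n` digits take their least value `N`. -/
def minDigitCylinder (N n : ℕ) : Set ℝ := uIoo ((invBranch N)^[n] 0) ((invBranch N)^[n] 1)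

def jointSet (N : ℕ) (a : ℝ) (n : ℕ) (x y : ℝ) : Set ℝ :=
  {x' ∈ Icc (0:ℝ) 1 | (TN N)^[n] x' ∈ Icc (0:ℝ) x ∧ sSeq N a x' n ∈ Icc (0:ℝ) y}

lemma jointSet_mono {N : ℕ} {a : ℝ} {n : ℕ} {x y y' : ℝ} (hy : y ≤ y') :
    jointSet N a n x y ⊆ jointSet N a n x y' :=
  fun _ ⟨h₀, h₁, h₂⟩ => ⟨h₀, h₁, h₂.1, h₂.2.trans hy⟩

section minDigitCylinder

variable {N : ℕ}

lemma minDigitCylinder_subset_image (hN : 0 < N) (n : ℕ) :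
    minDigitCylinder N n ⊆ (invBranch N)^[n] '' Ioo 0 1 := by
  have hcont := (continuousOn_invBranch hN).iterate (mapsTo_invBranch_Icc hN) n
  rcases le_total ((invBranch N)^[n] 0) ((invBranch N)^[n] 1) with h | h
  · rw [minDigitCylinder, uIoo_of_le h]; exact intermediate_value_Ioo zero_le_one hcont
  · rw [minDigitCylinder, uIoo_of_ge h]; exact intermediate_value_Ioo' zero_le_one hcont

lemma minDigitCylinder_subset_jointSet_diff (hN : 0 < N) {a y : ℝ} (ha : a ∈ Icc 0 1) {n : ℕ}
    (hy : y < (invBranch N)^[n] a) :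
    minDigitCylinder N n ⊆ jointSet N a n 1 ((invBranch N)^[n] a) \ jointSet N a n 1 y := by
  intro x hx
  obtain ⟨t, ht, rfl⟩ := minDigitCylinder_subset_image hN n hx
  have hs : sSeq N a ((invBranch N)^[n] t) n = (invBranch N)^[n] a :=
    sSeq_eq_iterate_invBranch fun _ hk => digit_iterate_invBranch hN ht hk
  refine ⟨⟨Ioo_subset_Icc_self ((mapsTo_invBranch_Ioo hN).iterate n ht), ?_, ?_⟩, ?_⟩
  · rw [iterate_TN_iterate_invBranch hN ht]; exact Ioo_subset_Icc_self ht
  · rw [hs]; exact ⟨((mapsTo_invBranch_Icc hN).iterate n ha).1, le_rfl⟩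
  · rintro ⟨-, -, -, hle⟩; rw [hs] at hle; exact hy.not_ge hle

end minDigitCylinder

section GNa

variable {N : ℕ} {a : ℝ}

lemma continuousOn_GNa_density (hN : 0 < N) (ha : 0 ≤ a) :
    ContinuousOn (fun x : ℝ => (N : ℝ) * (N + a) / (a * x + N) ^ 2) (Ici 0) := by
  have : (0 : ℝ) < N := Nat.cast_pos.2 hN
  refine continuousOn_const.div (by fun_prop) fun x hx => ?_
  have : 0 ≤ a * x := mul_nonneg ha hx
  positivity

lemma isFiniteMeasure_GNa (hN : 0 < N) (ha : 0 ≤ a) : IsFiniteMeasure (GNa N a) :=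
  isFiniteMeasure_withDensity_ofReal
    ((continuousOn_GNa_density hN ha).mono Icc_subset_Ici_self).integrableOn_Icc.2

lemma GNa_Ioo (hN : 0 < N) (ha : 0 ≤ a) {u v : ℝ} (hu : 0 ≤ u) (huv : u ≤ v) (hv : v ≤ 1) :
    GNa N a (Ioo u v) = ENNReal.ofReal (N * (N + a) * (v - u) / ((a * u + N) * (a * v + N))) := by
  have hN' : (0 : ℝ) < N := Nat.cast_pos.2 hN
  have hpos : ∀ x ∈ Icc u v, 0 < a * x + N := fun x hx => by
    have : 0 ≤ a * x := mul_nonneg ha (hu.trans hx.1); positivity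
  have hcont : ContinuousOn (fun x : ℝ => (N : ℝ) * (N + a) / (a * x + N) ^ 2) (Icc u v) :=
    (continuousOn_GNa_density hN ha).mono fun x hx => hu.trans hx.1
  have hderiv : ∀ x ∈ uIcc u v, HasDerivAt (fun y => (N + a) * y / (a * y + N))
      ((N : ℝ) * (N + a) / (a * x + N) ^ 2) x := fun x hx => by
    rw [uIcc_of_le huv] at hx
    have hx := (hpos x hx).ne'
    exact (((hasDerivAt_id x).const_mul ((N : ℝ) + a)).div
      (((hasDerivAt_id x).const_mul a).add_const (N : ℝ)) hx).congr_deriv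
        (by simp only [id]; field_simp; ring)
  rw [GNa, withDensity_apply _ measurableSet_Ioo, Measure.restrict_restrict measurableSet_Ioo,
    inter_eq_self_of_subset_left (Ioo_subset_Icc_self.trans (Icc_subset_Icc hu hv)),
    ← ofReal_integral_eq_lintegral_ofReal (hcont.integrableOn_Icc.mono_set Ioo_subset_Icc_self)
      ((ae_restrict_mem measurableSet_Ioo).mono fun x hx => by
        have := hpos x (Ioo_subset_Icc_self hx); positivity),
    ← integral_Ioc_eq_integral_Ioo, ← intervalIntegral.integral_of_le huv,
    intervalIntegral.integral_eq_sub_of_hasDerivAt hderiv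
      ((intervalIntegrable_iff_integrableOn_Icc_of_le huv).2 hcont.integrableOn_Icc)]
  have := hpos u ⟨le_rfl, huv⟩
  have := hpos v ⟨huv, le_rfl⟩
  congr 1
  field_simp
  ring

lemma GNa_real_uIoo (hN : 0 < N) (ha : 0 ≤ a) {u v : ℝ} (hu : u ∈ Icc 0 1) (hv : v ∈ Icc 0 1) :
    (GNa N a).real (uIoo u v) = N * (N + a) * |v - u| / ((a * u + N) * (a * v + N)) := by
  have hN' : (0 : ℝ) < N := Nat.cast_pos.2 hN
  have := mul_nonneg ha hu.1
  have := mul_nonneg ha hv.1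
  rcases le_total u v with h | h
  · rw [uIoo_of_le h, measureReal_def, GNa_Ioo hN ha hu.1 h hv.2, abs_of_nonneg (sub_nonneg.2 h),
      ENNReal.toReal_ofReal (by have := sub_nonneg.2 h; positivity)]
  · rw [uIoo_of_ge h, measureReal_def, GNa_Ioo hN ha hv.1 h hu.2, abs_of_nonpos (sub_nonpos.2 h),
      ENNReal.toReal_ofReal (by have := sub_nonneg.2 h; positivity)]
    ring

end GNa

section lowerBound

variable {N : ℕ} {a : ℝ}

lemma le_GNa_real_minDigitCylinder (hN : 0 < N) (ha : a ∈ Icc 0 1) {n : ℕ} (hn : 1 ≤ n) :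
    (1 + N) * N ^ (n + 1) / (qt N (n + 2) * qt N (n + 3)) ≤
      (GNa N a).real (minDigitCylinder N n) := by
  obtain ⟨k, rfl⟩ : ∃ k, n = k + 1 := ⟨n - 1, by omega⟩
  simp only [add_assoc, Nat.reduceAdd]
  have hN' : (0 : ℝ) < N := Nat.cast_pos.2 hN
  have hA : 0 < qt N (k + 1) := qt_succ_pos hN k
  have hB : 0 < qt N (k + 2) := qt_succ_pos hN (k + 1)
  have hC : 0 < qt N (k + 3) := qt_succ_pos hN (k + 2)
  have hD : 0 < qt N (k + 4) := qt_succ_pos hN (k + 3)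
  have hendpoint : (invBranch N)^[k + 1] 0 = (invBranch N)^[k] 1 := by
    rw [Function.iterate_succ_apply, invBranch, add_zero, div_self hN'.ne']
  have hlength : |N * qt N (k + 2) / qt N (k + 3) - N * qt N (k + 1) / qt N (k + 2)| =
      N ^ (k + 2) / (qt N (k + 2) * qt N (k + 3)) := by
    have hcassini : qt N (k + 2) ^ 2 - qt N (k + 1) * qt N (k + 3) = (-N) ^ (k + 1) :=
      qt_succ_sq_sub_mul N (k + 1)
    have hdiff : N * qt N (k + 2) / qt N (k + 3) - N * qt N (k + 1) / qt N (k + 2) =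
        N * (qt N (k + 2) ^ 2 - qt N (k + 1) * qt N (k + 3)) / (qt N (k + 2) * qt N (k + 3)) := by
      field_simp
    rw [hdiff, hcassini, abs_div, abs_mul, abs_pow, abs_neg, abs_of_pos hN',
      abs_of_pos (mul_pos hB hC), ← pow_succ']
  have hE₁ : 0 < a * qt N (k + 1) + qt N (k + 2) := by have := ha.1; positivity
  have hE₂ : 0 < a * qt N (k + 2) + qt N (k + 3) := by have := ha.1; positivity
  rw [minDigitCylinder, hendpoint, GNa_real_uIoo hN ha.1 ((mapsTo_invBranch_Icc hN).iterate k
    ⟨zero_le_one, le_rfl⟩) ((mapsTo_invBranch_Icc hN).iterate (k + 1) ⟨zero_le_one, le_rfl⟩),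
    iterate_invBranch_one hN, iterate_invBranch_one hN, hlength]
  have hmeasure : N * (N + a) * (N ^ (k + 2) / (qt N (k + 2) * qt N (k + 3))) /
      ((a * (N * qt N (k + 1) / qt N (k + 2)) + N) * (a * (N * qt N (k + 2) / qt N (k + 3)) + N)) =
      (N + a) * N ^ (k + 1) /
        ((a * qt N (k + 1) + qt N (k + 2)) * (a * qt N (k + 2) + qt N (k + 3))) := by
    field_simp
    ring
  rw [hmeasure, div_le_div_iff₀ (by positivity) (by positivity)]
  have := mul_le_mul_of_nonneg_left (one_add_mul_mul_le_qt hN ha (k + 1))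
    (pow_nonneg hN'.le (k + 1))
  rw [pow_succ]
  linarith

lemma GNa_real_jointSet_add_le (hN : 0 < N) (ha : a ∈ Icc 0 1) {n : ℕ} {y : ℝ}
    (hy : y < (invBranch N)^[n] a) :
    (GNa N a).real (jointSet N a n 1 y) + (GNa N a).real (minDigitCylinder N n) ≤
      (GNa N a).real (jointSet N a n 1 ((invBranch N)^[n] a)) := by
  have := isFiniteMeasure_GNa hN ha.1
  have hsub := minDigitCylinder_subset_jointSet_diff hN ha hy
  rw [← measureReal_union (disjoint_sdiff_right.mono_right hsub) measurableSet_Ioo]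
  exact measureReal_mono (union_subset (jointSet_mono hy.le) (hsub.trans sdiff_subset))

end lowerBound

lemma abs_inv_log_mul_log_le_one {N : ℕ} (hN : 0 < N) {t : ℝ} (ht : t ∈ Icc 0 1) :
    |(Real.log ((N + 1) / N))⁻¹ * Real.log ((t + N) / N)| ≤ 1 := by
  have hN' : (0 : ℝ) < N := Nat.cast_pos.2 hN
  have hlog₀ : 0 ≤ Real.log ((t + N) / N) :=
    Real.log_nonneg ((le_div_iff₀ hN').2 (by linarith [ht.1]))
  have hlog₁ : Real.log ((t + N) / N) ≤ Real.log ((N + 1) / N) :=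
    Real.log_le_log (by have := ht.1; positivity)
      (div_le_div_of_nonneg_right (by linarith [ht.2]) hN'.le)
  rw [abs_of_nonneg (mul_nonneg (inv_nonneg.2 (hlog₀.trans hlog₁)) hlog₀)]
  exact inv_mul_le_one_of_le₀ hlog₁ (hlog₀.trans hlog₁)

/-- Lower bound: for every `a ∈ I` and `n ≥ 1`,
`(1/2) v_{N(n)}(1) ≤ sup_{x,y ∈ I} |G_{N,a}(T_N^n ∈ [0,x], s_{n,a} ∈ [0,y])
  − (1/log((N+1)/N)) log((xy+N)/N)|`, where `v_{N(n)}(1) = (1+N) N^{n+1}/(q̃_{n+1} q̃_{n+2})`. -/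
theorem lower_bound_two_dim (N : ℕ) (hN : 1 ≤ N) (a : ℝ) (ha : a ∈ Icc (0:ℝ) 1)
    (n : ℕ) (hn : 1 ≤ n) :
    (1/2) * ((1 + N) * (N : ℝ) ^ (n+1) / (qt N (n+2) * qt N (n+3))) ≤
      ⨆ p : Icc (0:ℝ) 1 × Icc (0:ℝ) 1,
        |(GNa N a {x' ∈ Icc (0:ℝ) 1 |
              (TN N)^[n] x' ∈ Icc (0:ℝ) p.1 ∧ sSeq N a x' n ∈ Icc (0:ℝ) p.2}).toReal
          - (Real.log ((N+1)/N))⁻¹ * Real.log (((p.1 : ℝ) * (p.2 : ℝ) + N) / N)| := by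
  have hfin := isFiniteMeasure_GNa hN ha.1
  set S := ⨆ p : Icc (0:ℝ) 1 × Icc (0:ℝ) 1, |(GNa N a).real (jointSet N a n p.1 p.2) -
    (Real.log ((N + 1) / N))⁻¹ * Real.log ((p.1 * p.2 + N) / N)|
  show _ ≤ S
  set F : ℝ → ℝ := fun y => (GNa N a).real (jointSet N a n 1 y)
  set H : ℝ → ℝ := fun y => (Real.log ((N + 1) / N))⁻¹ * Real.log ((1 * y + N) / N)
  have hy₀ : (invBranch N)^[n] a ∈ Ioc 0 1 := by
    obtain ⟨k, rfl⟩ : ∃ k, n = k + 1 := ⟨n - 1, by omega⟩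
    rw [Function.iterate_succ_apply']
    exact invBranch_mem_Ioc hN ((mapsTo_invBranch_Icc hN).iterate k ha).1
  have hH : ContinuousWithinAt H (Iio ((invBranch N)^[n] a)) ((invBranch N)^[n] a) := by
    have : (1 * (invBranch N)^[n] a + N) / N ≠ 0 := by have := hy₀.1; positivity
    exact ContinuousAt.continuousWithinAt (by fun_prop (disch := assumption))
  have hbdd := bddAbove_range_abs_measureReal_sub (GNa N a)
    (fun p : Icc (0:ℝ) 1 × Icc (0:ℝ) 1 => jointSet N a n p.1 p.2)
    fun p => abs_inv_log_mul_log_le_one hN (unitInterval.mul_mem p.1.2 p.2.2)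
  have hS : ∀ᶠ y in 𝓝[≤] (invBranch N)^[n] a, |F y - H y| ≤ S := by
    filter_upwards [Ioc_mem_nhdsLE hy₀.1] with y hy
    exact le_ciSup hbdd (⟨1, right_mem_Icc.2 zero_le_one⟩, ⟨y, hy.1.le, hy.2.trans hy₀.2⟩)
  have hjump := le_two_mul_of_jump (F := F) hH
    (fun y hy => le_sub_iff_add_le'.2 (GNa_real_jointSet_add_le hN ha hy)) hS
  linarith [le_GNa_real_minDigitCylinder hN ha hn]
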